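/- Let m = 2t with t ≥ 3, let E_1,…,E_{2^t+1} be a partial spread of t-dimensional subspaces of F_2^m, let A, B be subsets of indices with |A| = |B| = s, |A ∩ B| = 1, and 2 ≤ s ≤ 2^{t−1} − 1. Define f = Σ_{i∈A} f_i and g = Σ_{i∈B} f_i (f_i the mod-2 indicator of E_i\{0}). Then the code C_{f,g} = {(u f(x) + r g(x) + v·x)_{x∈F_2^m\{0}} : u,r ∈ F_2, v ∈ F_2^m} is a [2^m − 1, m+2] binary linear code in which every nonzero codeword has Hamming weight in the set {s(2^t−1), (2s−2)(2^t−1), 2^{m−1}, 2^{m−1}−s, 2^{m−1}−(2s−2), 2^{m−1}+2^t−s, 2^{m−1}+2^t−(2s−2)}. -/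

import Mathlib

/-!
Write `f_S = ∑_{i ∈ S} f_i` (`spreadSum E S`). Since the punctured spread elements `E_i \ {0}` are
pairwise disjoint, `f_S` is the indicator of `U_S = ⋃_{i ∈ S} E_i \ {0}`, a set of size
`|S| (2^t - 1)`. Every codeword is `f_S + v·x` with `S ∈ {∅, A, B, A Δ B}`, and `|A Δ B| = 2s - 2`.

Over `F_2`, `wt (a + b) = wt a + wt b - 2 |supp a ∩ supp b|`. For `v ≠ 0` the hyperplane complement
`{v·x = 1}` has `2^(m-1)` points, and each `E_i` either lies in `v^⊥` or meets `{v·x = 1}` in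
`2^(t-1)` points. Two distinct spread elements span `F_2^m`, so at most one of them lies in `v^⊥`.
Hence the weight is `|S| (2^t - 1)` if `v = 0` and `2^(m-1) - |S| + c 2^t` with `c ∈ {0, 1}`
otherwise. All seven resulting values are positive, so `(u, r, v) ↦ codeword` is injective and the
code has dimension `m + 2`.
-/

open Finset
open scoped Classical

noncomputable section

/-- Standard inner product on `F_2^m`. -/
def ip {m : ℕ} (w x : Fin m → ZMod 2) : ZMod 2 := ∑ i, w i * x i

/-- The code `C_{f,g}`, a set of vectors indexed by the nonzero elements of `F_2^m`. -/
def codeFG {m : ℕ} (f g : (Fin m → ZMod 2) → ZMod 2) :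
    Set ({x : Fin m → ZMod 2 // x ≠ 0} → ZMod 2) :=
  {c | ∃ u r : ZMod 2, ∃ v : Fin m → ZMod 2,
    c = fun x => u * f x.1 + r * g x.1 + ip v x.1}

/-- Hamming weight of a codeword. -/
def cwt {m : ℕ} (c : {x : Fin m → ZMod 2 // x ≠ 0} → ZMod 2) : ℕ :=
  (Finset.univ.filter (fun x => c x ≠ 0)).card

lemma zmod2_eq_zero_or_one (a : ZMod 2) : a = 0 ∨ a = 1 := by
  revert a
  decide

lemma card_filter_add_ne_zero_add_two_mul {α : Type*} [Fintype α] (a b : α → ZMod 2) :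
    #{x | a x + b x ≠ 0} + 2 * #{x | a x ≠ 0 ∧ b x ≠ 0} = #{x | a x ≠ 0} + #{x | b x ≠ 0} := by
  simp only [card_filter, mul_sum, ← sum_add_distrib]
  refine sum_congr rfl fun x _ => ?_
  generalize a x = p, b x = q
  revert p q
  decide

lemma card_filter_subtype_ne_zero {V : Type*} [Zero V] [Fintype V] [DecidableEq V] {p : V → Prop}
    [DecidablePred p] (hp : ¬p 0) :
    #{x : {x : V // x ≠ 0} | p x.1} = #{x | p x} := by
  rw [← Fintype.card_subtype, ← Fintype.card_subtype]
  exact Fintype.card_congr (Equiv.subtypeSubtypeEquivSubtype fun hx h0 => hp (h0 ▸ hx))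

lemma card_filter_mem_eq_pow_finrank {K V : Type*} [Field K] [Fintype K] [AddCommGroup V]
    [Module K V] [Fintype V] (W : Submodule K V) :
    #{x | x ∈ W} = Fintype.card K ^ Module.finrank K W := by
  rw [← Fintype.card_subtype, ← Module.card_eq_pow_finrank]

lemma card_filter_mem_and_ne_zero {K V : Type*} [Field K] [Fintype K] [AddCommGroup V]
    [Module K V] [Fintype V] [DecidableEq V] (W : Submodule K V) :
    #{x | x ∈ W ∧ x ≠ 0} = Fintype.card K ^ Module.finrank K W - 1 := by
  rw [← filter_filter, filter_ne', card_erase_of_mem (mem_filter.mpr ⟨mem_univ _, W.zero_mem⟩),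
    card_filter_mem_eq_pow_finrank]

lemma two_mul_card_filter_mem_and_ne_zero {V : Type*} [AddCommGroup V] [Module (ZMod 2) V]
    [Fintype V] (W : Submodule (ZMod 2) V) (φ : Module.Dual (ZMod 2) V) :
    2 * #{x | x ∈ W ∧ φ x ≠ 0} =
      if W ≤ LinearMap.ker φ then 0 else 2 ^ Module.finrank (ZMod 2) W := by
  split_ifs with hW
  · rw [card_eq_zero.mpr (filter_eq_empty_iff.mpr fun x _ ⟨hxW, hφx⟩ => hφx (hW hxW)), mul_zero]
  obtain ⟨x₀, hx₀W, hx₀⟩ := SetLike.not_le_iff_exists.mp hW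
  have hφx₀ : φ x₀ = 1 := (zmod2_eq_zero_or_one _).resolve_left hx₀
  have htranslate : #{x | x ∈ W ∧ φ x ≠ 0} = #{x | x ∈ W ∧ ¬φ x ≠ 0} := by
    refine card_nbij' (· + x₀) (· - x₀) (fun x hx => ?_) (fun x hx => ?_)
      (fun x _ => add_sub_cancel_right x x₀) (fun x _ => sub_add_cancel x x₀)
    · simp only [coe_filter, mem_univ, true_and, Set.mem_ofPred_eq, map_add, hφx₀] at hx ⊢
      rw [(zmod2_eq_zero_or_one _).resolve_left hx.2]
      exact ⟨W.add_mem hx.1 hx₀W, by decide⟩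
    · simp only [coe_filter, mem_univ, true_and, Set.mem_ofPred_eq, map_sub, hφx₀] at hx ⊢
      rw [not_not.mp hx.2]
      exact ⟨W.sub_mem hx.1 hx₀W, by decide⟩
  rw [two_mul]
  nth_rewrite 2 [htranslate]
  rw [← filter_filter, ← filter_filter, card_filter_add_card_filter_not,
    card_filter_mem_eq_pow_finrank, ZMod.card]

lemma sum_add_sum_eq_sum_union_sdiff_inter {ι R : Type*} [DecidableEq ι] [CommRing R] [CharP R 2]
    (A B : Finset ι) (h : ι → R) : ∑ i ∈ A, h i + ∑ i ∈ B, h i = ∑ i ∈ (A ∪ B) \ (A ∩ B), h i := by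
  rw [← sum_union_inter, ← sum_sdiff inter_subset_union, add_assoc, CharTwo.add_self_eq_zero,
    add_zero]

section Spread

variable {ι V : Type*}

lemma eq_of_mem_of_inf_eq_bot {R : Type*} [Semiring R] [AddCommMonoid V] [Module R V]
    {E : ι → Submodule R V}
    (hE : ∀ i j, i ≠ j → E i ⊓ E j = ⊥) {x : V} (hx : x ≠ 0) {i j : ι}
    (hi : x ∈ E i) (hj : x ∈ E j) : i = j := by
  by_contra hij
  exact hx <| (Submodule.mem_bot R).mp (hE i j hij ▸ Submodule.mem_inf.mpr ⟨hi, hj⟩)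

lemma card_filter_exists_mem_and {R : Type*} [Semiring R] [AddCommMonoid V] [Module R V]
    [Fintype V] [DecidableEq V] {E : ι → Submodule R V} (hE : ∀ i j, i ≠ j → E i ⊓ E j = ⊥)
    (S : Finset ι) {q : V → Prop} [DecidablePred q] (hq : ∀ x, q x → x ≠ 0) :
    #{x | (∃ i ∈ S, x ∈ E i) ∧ q x} = ∑ i ∈ S, #{x | x ∈ E i ∧ q x} := by
  rw [← card_biUnion]
  · congr 1
    ext x
    simp only [mem_filter, mem_univ, true_and, mem_biUnion]
    constructor
    · rintro ⟨⟨i, hiS, hi⟩, hqx⟩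
      exact ⟨i, hiS, hi, hqx⟩
    · rintro ⟨i, hiS, hi, hqx⟩
      exact ⟨⟨i, hiS, hi⟩, hqx⟩
  · intro i _ j _ hij
    rw [Function.onFun, disjoint_filter]
    rintro x - ⟨hi, hqx⟩ ⟨hj, -⟩
    exact hij (eq_of_mem_of_inf_eq_bot hE (hq x hqx) hi hj)

lemma card_filter_le_ker_le_one {K : Type*} [Field K] [AddCommGroup V] [Module K V]
    [FiniteDimensional K V]
    {E : ι → Submodule K V} (hE : ∀ i j, i ≠ j → E i ⊓ E j = ⊥)
    (hdim : ∀ i j, Module.finrank K V ≤ Module.finrank K (E i) + Module.finrank K (E j))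
    {φ : Module.Dual K V} (hφ : φ ≠ 0) (S : Finset ι) :
    #{i ∈ S | E i ≤ LinearMap.ker φ} ≤ 1 := by
  refine card_le_one.mpr fun i hi j hj => ?_
  by_contra hij
  have hsup : E i ⊔ E j = ⊤ :=
    Submodule.eq_top_of_disjoint _ _ (hdim i j) (disjoint_iff.mpr (hE i j hij))
  have hker : LinearMap.ker φ = ⊤ :=
    top_le_iff.mp (hsup ▸ sup_le (mem_filter.mp hi).2 (mem_filter.mp hj).2)
  exact hφ (LinearMap.ker_eq_top.mp hker)

variable [AddCommGroup V] [Module (ZMod 2) V] [DecidableEq V] {E : ι → Submodule (ZMod 2) V}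

def spreadSum (E : ι → Submodule (ZMod 2) V) (S : Finset ι) (x : V) : ZMod 2 :=
  ∑ i ∈ S, if x ∈ E i ∧ x ≠ 0 then 1 else 0

lemma spreadSum_ne_zero_iff (hE : ∀ i j, i ≠ j → E i ⊓ E j = ⊥) (S : Finset ι) (x : V) :
    spreadSum E S x ≠ 0 ↔ (∃ i ∈ S, x ∈ E i) ∧ x ≠ 0 := by
  have hle : #{i ∈ S | x ∈ E i ∧ x ≠ 0} ≤ 1 :=
    card_le_one.mpr fun i hi j hj =>
      eq_of_mem_of_inf_eq_bot hE (mem_filter.mp hi).2.2 (mem_filter.mp hi).2.1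
        (mem_filter.mp hj).2.1
  rw [spreadSum, sum_boole]
  have hcast : ((#{i ∈ S | x ∈ E i ∧ x ≠ 0} : ℕ) : ZMod 2) ≠ 0 ↔
      0 < #{i ∈ S | x ∈ E i ∧ x ≠ 0} := by
    interval_cases #{i ∈ S | x ∈ E i ∧ x ≠ 0} <;> decide
  rw [hcast, card_pos, filter_nonempty_iff]
  aesop

lemma spreadSum_add_spreadSum [DecidableEq ι] (E : ι → Submodule (ZMod 2) V) (A B : Finset ι)
    (x : V) :
    spreadSum E A x + spreadSum E B x = spreadSum E ((A ∪ B) \ (A ∩ B)) x :=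
  sum_add_sum_eq_sum_union_sdiff_inter A B _

end Spread

section Weight

variable {m : ℕ} {ι : Type*} {E : ι → Submodule (ZMod 2) (Fin m → ZMod 2)}

lemma ip_eq_dotProduct (v x : Fin m → ZMod 2) : ip v x = v ⬝ᵥ x := rfl

lemma ne_zero_of_ip_ne_zero {v x : Fin m → ZMod 2} (h : ip v x ≠ 0) : x ≠ 0 := by
  rintro rfl
  exact h (dotProduct_zero v)

lemma cwt_spreadSum_add_ip {t : ℕ} (hE : ∀ i j, i ≠ j → E i ⊓ E j = ⊥)
    (hdim : ∀ i, Module.finrank (ZMod 2) (E i) = t) (S : Finset ι) (v : Fin m → ZMod 2) :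
    cwt (fun x => spreadSum E S x.1 + ip v x.1)
        + #{i ∈ S | ¬E i ≤ LinearMap.ker (dotProductEquiv (ZMod 2) (Fin m) v)} * 2 ^ t
      = #S * (2 ^ t - 1) + #{x | ip v x ≠ 0} := by
  have hsum0 : spreadSum E S 0 = 0 := by simp [spreadSum]
  have hU : #{x : {x : Fin m → ZMod 2 // x ≠ 0} | spreadSum E S x.1 ≠ 0} = #S * (2 ^ t - 1) := by
    rw [card_filter_subtype_ne_zero (p := fun x => spreadSum E S x ≠ 0) (by simpa using hsum0),
      filter_congr fun x _ => spreadSum_ne_zero_iff hE S x,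
      card_filter_exists_mem_and hE S fun _ h => h]
    simp only [card_filter_mem_and_ne_zero, hdim, ZMod.card, sum_const, smul_eq_mul]
  have hUT : 2 * #{x : {x : Fin m → ZMod 2 // x ≠ 0} | spreadSum E S x.1 ≠ 0 ∧ ip v x.1 ≠ 0}
      = #{i ∈ S | ¬E i ≤ LinearMap.ker (dotProductEquiv (ZMod 2) (Fin m) v)} * 2 ^ t := by
    rw [card_filter_subtype_ne_zero (p := fun x => spreadSum E S x ≠ 0 ∧ ip v x ≠ 0)
      (by simp [hsum0])]
    have hpred : ∀ x, spreadSum E S x ≠ 0 ∧ ip v x ≠ 0 ↔ (∃ i ∈ S, x ∈ E i) ∧ ip v x ≠ 0 := by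
      intro x
      rw [spreadSum_ne_zero_iff hE]
      exact ⟨fun ⟨⟨hS, _⟩, hv⟩ => ⟨hS, hv⟩, fun ⟨hS, hv⟩ => ⟨⟨hS, ne_zero_of_ip_ne_zero hv⟩, hv⟩⟩
    rw [filter_congr fun x _ => hpred x,
      card_filter_exists_mem_and hE S fun _ => ne_zero_of_ip_ne_zero, mul_sum]
    calc ∑ i ∈ S, 2 * #{x | x ∈ E i ∧ ip v x ≠ 0}
        = ∑ i ∈ S, if E i ≤ LinearMap.ker (dotProductEquiv (ZMod 2) (Fin m) v) then 0 else 2 ^ t :=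
          sum_congr rfl fun i _ => by
            have h := two_mul_card_filter_mem_and_ne_zero (E i) (dotProductEquiv (ZMod 2) (Fin m) v)
            simp only [dotProductEquiv_apply_apply, hdim] at h
            exact h
      _ = _ := by rw [sum_ite, sum_const_zero, zero_add, sum_const, smul_eq_mul]
  have hT : #{x : {x : Fin m → ZMod 2 // x ≠ 0} | ip v x.1 ≠ 0} = #{x | ip v x ≠ 0} :=
    card_filter_subtype_ne_zero (p := fun x => ip v x ≠ 0) fun h => h (dotProduct_zero v)
  have key := card_filter_add_ne_zero_add_two_mul (fun x : {x : Fin m → ZMod 2 // x ≠ 0} =>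
    spreadSum E S x.1) (fun x => ip v x.1)
  rw [hU, hT, hUT] at key
  exact key

lemma cwt_spreadSum_add_ip_zero {t : ℕ} (hE : ∀ i j, i ≠ j → E i ⊓ E j = ⊥)
    (hdim : ∀ i, Module.finrank (ZMod 2) (E i) = t) (S : Finset ι) :
    cwt (fun x => spreadSum E S x.1 + ip 0 x.1) = #S * (2 ^ t - 1) := by
  simpa [ip] using cwt_spreadSum_add_ip hE hdim S 0

end Weight

lemma cwt_spreadSum_add_ip_of_ne_zero {ι : Type*} {t : ℕ} (ht : 1 ≤ t)
    {E : ι → Submodule (ZMod 2) (Fin (2 * t) → ZMod 2)} (hE : ∀ i j, i ≠ j → E i ⊓ E j = ⊥)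
    (hdim : ∀ i, Module.finrank (ZMod 2) (E i) = t) (S : Finset ι) {v : Fin (2 * t) → ZMod 2}
    (hv : v ≠ 0) :
    ∃ c ≤ 1, c ≤ #S ∧
      (cwt (fun x => spreadSum E S x.1 + ip v x.1) : ℤ) = 2 ^ (2 * t - 1) - #S + c * 2 ^ t := by
  set φ := dotProductEquiv (ZMod 2) (Fin (2 * t)) v
  have hφ : φ ≠ 0 := (LinearEquiv.map_ne_zero_iff _).mpr hv
  have hc := card_filter_le_ker_le_one hE (by simp [hdim, two_mul]) hφ S
  have hsplit := card_filter_add_card_filter_not (s := S) (fun i => E i ≤ LinearMap.ker φ)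
  have hN : #{x | ip v x ≠ 0} = 2 ^ (2 * t - 1) := by
    have h := two_mul_card_filter_mem_and_ne_zero ⊤ φ
    simp only [top_le_iff, LinearMap.ker_eq_top, hφ, if_false, Submodule.mem_top, true_and,
      finrank_top, Module.finrank_fin_fun] at h
    have hpow : 2 ^ (2 * t) = 2 * 2 ^ (2 * t - 1) := by
      rw [← pow_succ']
      congr 1
      omega
    change 2 * #{x | ip v x ≠ 0} = 2 ^ (2 * t) at h
    omega
  have key := cwt_spreadSum_add_ip hE hdim S v
  refine ⟨#{i ∈ S | E i ≤ LinearMap.ker φ}, hc, card_le_card (filter_subset _ _), ?_⟩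
  zify [Nat.one_le_two_pow] at key hN hsplit
  linear_combination key - hsplit * 2 ^ t + hN

def codeWeights (t s : ℕ) : Set ℤ :=
  {(s : ℤ) * (2 ^ t - 1), (2 * (s : ℤ) - 2) * (2 ^ t - 1),
    (2 : ℤ) ^ (2 * t - 1), (2 : ℤ) ^ (2 * t - 1) - s,
    (2 : ℤ) ^ (2 * t - 1) - (2 * (s : ℤ) - 2), (2 : ℤ) ^ (2 * t - 1) + 2 ^ t - s,
    (2 : ℤ) ^ (2 * t - 1) + 2 ^ t - (2 * (s : ℤ) - 2)}

lemma pos_of_mem_codeWeights {t s : ℕ} (ht : 1 ≤ t) (hs2 : 2 ≤ s) (hs : s ≤ 2 ^ (t - 1) - 1)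
    {z : ℤ} (hz : z ∈ codeWeights t s) : 0 < z := by
  obtain ⟨k, rfl⟩ : ∃ k, t = k + 1 := ⟨t - 1, by omega⟩
  simp only [codeWeights, Set.mem_insert_iff, Set.mem_singleton_iff, add_tsub_cancel_right,
    show 2 * (k + 1) - 1 = 2 * k + 1 by omega] at hs hz
  have hsk : (s : ℤ) ≤ 2 ^ k - 1 := by
    zify [Nat.one_le_two_pow] at hs
    exact hs
  have hs2' : (2 : ℤ) ≤ s := by exact_mod_cast hs2
  have hpow₁ : (2 : ℤ) ^ (k + 1) = 2 * 2 ^ k := by ring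
  have hpow₂ : (2 : ℤ) ^ (2 * k + 1) = 2 * 2 ^ k * 2 ^ k := by ring
  rcases hz with rfl | rfl | rfl | rfl | rfl | rfl | rfl <;> simp only [hpow₁, hpow₂] <;> nlinarith

section Codewords

variable {ι : Type*} {t s : ℕ} {E : ι → Submodule (ZMod 2) (Fin (2 * t) → ZMod 2)}

lemma cwt_mem_codeWeights (ht : 1 ≤ t) (hE : ∀ i j, i ≠ j → E i ⊓ E j = ⊥)
    (hdim : ∀ i, Module.finrank (ZMod 2) (E i) = t) {S : Finset ι}
    (hS : (#S : ℤ) = s ∨ (#S : ℤ) = 2 * s - 2) (v : Fin (2 * t) → ZMod 2) :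
    (cwt (fun x => spreadSum E S x.1 + ip v x.1) : ℤ) ∈ codeWeights t s := by
  rcases eq_or_ne v 0 with rfl | hv
  · rw [cwt_spreadSum_add_ip_zero hE hdim S]
    push_cast [Nat.one_le_two_pow]
    rcases hS with hS | hS <;> simp [codeWeights, hS]
  · obtain ⟨c, hc, -, h⟩ := cwt_spreadSum_add_ip_of_ne_zero ht hE hdim S hv
    rw [h]
    rcases hS with hS | hS <;> interval_cases c <;> simp [codeWeights, hS, sub_add_eq_add_sub]

lemma cwt_mem_codeWeights_of_empty (ht : 1 ≤ t) (hE : ∀ i j, i ≠ j → E i ⊓ E j = ⊥)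
    (hdim : ∀ i, Module.finrank (ZMod 2) (E i) = t) {v : Fin (2 * t) → ZMod 2} (hv : v ≠ 0) :
    (cwt (fun x => spreadSum E ∅ x.1 + ip v x.1) : ℤ) ∈ codeWeights t s := by
  obtain ⟨c, -, hc, h⟩ := cwt_spreadSum_add_ip_of_ne_zero ht hE hdim ∅ hv
  obtain rfl : c = 0 := by simpa using hc
  simp [codeWeights, h]

end Codewords

section Code

variable {m : ℕ}

def codeMap (f g : (Fin m → ZMod 2) → ZMod 2) :
    ZMod 2 × ZMod 2 × (Fin m → ZMod 2) →ₗ[ZMod 2] ({x : Fin m → ZMod 2 // x ≠ 0} → ZMod 2) where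
  toFun p x := p.1 * f x.1 + p.2.1 * g x.1 + ip p.2.2 x.1
  map_add' p q := by
    ext x
    simp only [ip_eq_dotProduct, Prod.fst_add, Prod.snd_add, Pi.add_apply, add_dotProduct]
    ring
  map_smul' c p := by
    ext x
    simp only [ip_eq_dotProduct, Prod.smul_fst, Prod.smul_snd, Pi.smul_apply, smul_eq_mul,
      smul_dotProduct, RingHom.id_apply]
    ring

lemma codeFG_eq_range (f g : (Fin m → ZMod 2) → ZMod 2) :
    codeFG f g = LinearMap.range (codeMap f g) := by
  ext c
  constructor
  · rintro ⟨u, r, v, rfl⟩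
    exact ⟨(u, r, v), rfl⟩
  · rintro ⟨⟨u, r, v⟩, rfl⟩
    exact ⟨u, r, v, rfl⟩

lemma cwt_eq_zero_iff {c : {x : Fin m → ZMod 2 // x ≠ 0} → ZMod 2} : cwt c = 0 ↔ c = 0 := by
  simp [cwt, funext_iff]

end Code

lemma cwt_codeMap_mem_codeWeights {ι : Type*} [DecidableEq ι] {t s : ℕ} (ht : 1 ≤ t)
    {E : ι → Submodule (ZMod 2) (Fin (2 * t) → ZMod 2)} (hE : ∀ i j, i ≠ j → E i ⊓ E j = ⊥)
    (hdim : ∀ i, Module.finrank (ZMod 2) (E i) = t) {A B : Finset ι} (hA : #A = s)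
    (hB : #B = s) (hAB : #(A ∩ B) = 1) {p : ZMod 2 × ZMod 2 × (Fin (2 * t) → ZMod 2)}
    (hp : p ≠ 0) : (cwt (codeMap (spreadSum E A) (spreadSum E B) p) : ℤ) ∈ codeWeights t s := by
  obtain ⟨u, r, v⟩ := p
  rcases zmod2_eq_zero_or_one u with rfl | rfl <;>
    rcases zmod2_eq_zero_or_one r with rfl | rfl
  · have hv : v ≠ 0 := by rintro rfl; exact hp rfl
    convert cwt_mem_codeWeights_of_empty ht hE hdim hv using 3
    ext x
    simp [codeMap, spreadSum]
  · convert cwt_mem_codeWeights ht hE hdim (S := B) (Or.inl (by rw [hB])) v using 3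
    ext x
    simp [codeMap]
  · convert cwt_mem_codeWeights ht hE hdim (S := A) (Or.inl (by rw [hA])) v using 3
    ext x
    simp [codeMap]
  · have hcard : (#((A ∪ B) \ (A ∩ B)) : ℤ) = 2 * s - 2 := by
      have := card_union_add_card_inter A B
      rw [card_sdiff_of_subset inter_subset_union]
      omega
    convert cwt_mem_codeWeights ht hE hdim (Or.inr hcard) v using 3
    ext x
    simp [codeMap, spreadSum_add_spreadSum]

theorem stmt_14 (t s : ℕ) (ht : 3 ≤ t) (hs2 : 2 ≤ s) (hs : s ≤ 2 ^ (t - 1) - 1)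
    (E : Fin (2 ^ t + 1) → Submodule (ZMod 2) (Fin (2 * t) → ZMod 2))
    (hdim : ∀ i, Module.finrank (ZMod 2) (E i) = t)
    (hspread : ∀ i j, i ≠ j → E i ⊓ E j = ⊥)
    (A B : Finset (Fin (2 ^ t + 1))) (hA : A.card = s) (hB : B.card = s)
    (hAB : (A ∩ B).card = 1)
    (f g : (Fin (2 * t) → ZMod 2) → ZMod 2)
    (hf : ∀ x, f x = ∑ i ∈ A, (if x ∈ E i ∧ x ≠ 0 then (1 : ZMod 2) else 0))
    (hg : ∀ x, g x = ∑ i ∈ B, (if x ∈ E i ∧ x ≠ 0 then (1 : ZMod 2) else 0)) :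
    Fintype.card {x : Fin (2 * t) → ZMod 2 // x ≠ 0} = 2 ^ (2 * t) - 1 ∧
    Module.finrank (ZMod 2) (Submodule.span (ZMod 2) (codeFG f g)) = 2 * t + 2 ∧
    ∀ c ∈ codeFG f g, c ≠ 0 →
      (cwt c : ℤ) ∈ ({(s : ℤ) * (2 ^ t - 1), (2 * (s : ℤ) - 2) * (2 ^ t - 1),
        (2 : ℤ) ^ (2 * t - 1), (2 : ℤ) ^ (2 * t - 1) - s,
        (2 : ℤ) ^ (2 * t - 1) - (2 * (s : ℤ) - 2), (2 : ℤ) ^ (2 * t - 1) + 2 ^ t - s,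
        (2 : ℤ) ^ (2 * t - 1) + 2 ^ t - (2 * (s : ℤ) - 2)} : Set ℤ) := by
  have ht1 : 1 ≤ t := by omega
  obtain rfl : f = spreadSum E A := funext hf
  obtain rfl : g = spreadSum E B := funext hg
  have hweights :
      ∀ p ≠ 0, (cwt (codeMap (spreadSum E A) (spreadSum E B) p) : ℤ) ∈ codeWeights t s :=
    fun p hp => cwt_codeMap_mem_codeWeights ht1 hspread hdim hA hB hAB hp
  have hinj : Function.Injective (codeMap (spreadSum E A) (spreadSum E B)) := by
    refine (injective_iff_map_eq_zero _).mpr fun p hp => ?_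
    by_contra hp0
    have hpos := pos_of_mem_codeWeights ht1 hs2 hs (hweights p hp0)
    rw [hp, cwt_eq_zero_iff.mpr rfl] at hpos
    exact lt_irrefl 0 hpos
  refine ⟨?_, ?_, ?_⟩
  · rw [Fintype.card_subtype_compl, Fintype.card_subtype_eq, Fintype.card_fun, ZMod.card,
      Fintype.card_fin]
  · rw [codeFG_eq_range, Submodule.span_eq, LinearMap.finrank_range_of_inj hinj]
    simp only [Module.finrank_prod, Module.finrank_self, Module.finrank_fin_fun]
    ring
  · rintro c ⟨u, r, v, rfl⟩ hc
    exact hweights (u, r, v) fun hp => hc (by rw [← map_zero (codeMap _ _), ← hp]; rfl)
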